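/- Let p, q ∈ ℕ and let s_1,…,s_p and t_1,…,t_q be positive integers with ∑_{i=1}^p s_i = ∑_{j=1}^q t_j = N. Set n = p + q, u = (s_1,…,s_p,t_1,…,t_q) ∈ ℕⁿ, a = (s_1,…,s_p,0,…,0) ∈ ℕⁿ, b = (0,…,0,t_1,…,t_q) ∈ ℕⁿ, and P = {x ∈ ℝⁿ : 0 ≤ x_i ≤ u_i for all i, and ∑_{i=1}^n x_i = N}. Then the minimum length of a path from a to b on the skeleton of P equals p + q − m, where m is the maximum size of a same-sum partition of [p] and [q] with respect to the weights (s_i) and (t_j). -/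

import Mathlib

/-!
The vertices of `P` are its points with at most one coordinate strictly inside its range, and
two adjacent vertices differ in only two coordinates. Along a skeleton path of length `ℓ` from
`a` to `b`, link the two coordinates changed at each step: the classes of the resulting
equivalence number at least `p + q - ℓ`, and `a` and `b` have the same total on each class, so
they form a same-sum partition. Conversely, inside each class of a same-sum partition, move mass
from an `s`-coordinate to a `t`-coordinate until one of them is settled; this is an edge of `P`,
and the last move in a class settles two coordinates, so a class of `c` coordinates is
transported in `c - 1` steps.
-/

namespace PaperBox

/-- Two distinct vertices (extreme points) `x, y` of `P` are adjacent on the skeleton of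
`P` if the segment `conv{x, y}` is an extreme subset of `P`. -/
def SkeletonAdj {n : ℕ} (P : Set (Fin n → ℝ)) (x y : Fin n → ℝ) : Prop :=
  x ≠ y ∧ x ∈ P.extremePoints ℝ ∧ y ∈ P.extremePoints ℝ ∧ IsExtreme ℝ P (segment ℝ x y)

/-- A path of length `ℓ` from `a` to `b` on the skeleton of `P`: a sequence of vertices of
`P` starting at `a`, ending at `b`, with consecutive vertices adjacent on the skeleton. -/
def SkeletonPath {n : ℕ} (P : Set (Fin n → ℝ)) (a b : Fin n → ℝ) (ℓ : ℕ) : Prop :=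
  ∃ g : ℕ → Fin n → ℝ, g 0 = a ∧ g ℓ = b ∧ (∀ i ≤ ℓ, g i ∈ P.extremePoints ℝ) ∧
    ∀ i < ℓ, SkeletonAdj P (g i) (g (i + 1))

/-- A same-sum partition of `S` and `T` of size `m`: partitions of `S` and of `T` into
`m` nonempty parts (encoded by surjections onto `Fin m`) such that corresponding parts
have equal weight. -/
def SameSumPartition {S T : Type*} [Fintype S] [Fintype T]
    (s : S → ℕ) (t : T → ℕ) (m : ℕ) : Prop :=
  ∃ (σ : S → Fin m) (τ : T → Fin m), Function.Surjective σ ∧ Function.Surjective τ ∧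
    ∀ ℓ : Fin m,
      ∑ i ∈ Finset.univ.filter (fun i => σ i = ℓ), s i =
        ∑ j ∈ Finset.univ.filter (fun j => τ j = ℓ), t j

open Finset

section FiberSums

variable {ι β M : Type*} [Fintype ι]

theorem sum_eq_sum_of_eqOn_compl_pair [DecidableEq ι] [AddCancelCommMonoid M] {x y : ι → M}
    {i j : ι} (hxy : ∀ k, k ≠ i → k ≠ j → x k = y k) (hsum : ∑ k, x k = ∑ k, y k)
    {K : Finset ι} (hK : i ∈ K ↔ j ∈ K) : ∑ k ∈ K, x k = ∑ k ∈ K, y k := by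
  have hagree : ∀ L : Finset ι, i ∉ L → j ∉ L → ∑ k ∈ L, x k = ∑ k ∈ L, y k :=
    fun L hi hj => sum_congr rfl fun k hk => hxy k (ne_of_mem_of_not_mem hk hi)
      (ne_of_mem_of_not_mem hk hj)
  by_cases hiK : i ∈ K
  · have hcompl := hagree Kᶜ (by simpa using hiK) (by simpa using hK.1 hiK)
    rw [← sum_compl_add_sum K, ← sum_compl_add_sum K y, hcompl] at hsum
    exact add_left_cancel hsum
  · exact hagree K hiK (hK.not.1 hiK)

variable [DecidableEq β]

def FiberSumsEq [AddCommMonoid M] (κ : ι → β) (x y : ι → M) : Prop :=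
  ∀ b, ∑ k with κ k = b, x k = ∑ k with κ k = b, y k

variable {κ : ι → β}

section AddCommMonoid

variable [AddCommMonoid M] {x y z : ι → M}

theorem FiberSumsEq.trans (hxy : FiberSumsEq κ x y) (hyz : FiberSumsEq κ y z) :
    FiberSumsEq κ x z :=
  fun b => (hxy b).trans (hyz b)

theorem FiberSumsEq.comp [Fintype β] {γ : Type*} [DecidableEq γ] (h : FiberSumsEq κ x y)
    (m : β → γ) : FiberSumsEq (m ∘ κ) x y := by
  have hsplit : ∀ (w : ι → M) (c : γ),
      ∑ k with m (κ k) = c, w k = ∑ b with m b = c, ∑ k with κ k = b, w k := by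
    intro w c
    rw [← sum_fiberwise_of_maps_to (g := κ) (t := univ.filter fun b => m b = c) (by simp)]
    refine sum_congr rfl fun b hb => ?_
    rw [filter_filter]
    congr 1
    ext k
    simp only [mem_filter, mem_univ, true_and] at hb ⊢
    constructor
    · exact And.right
    · intro hk; exact ⟨hk ▸ hb, hk⟩
  intro c
  simp only [Function.comp_apply, hsplit, h _]

end AddCommMonoid

theorem fiberSumsEq_of_eqOn_compl_pair [DecidableEq ι] [AddCancelCommMonoid M] {x y : ι → M}
    {i j : ι} (hxy : ∀ k, k ≠ i → k ≠ j → x k = y k)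
    (hsum : ∑ k, x k = ∑ k, y k) (hκ : κ i = κ j) : FiberSumsEq κ x y :=
  fun b => sum_eq_sum_of_eqOn_compl_pair hxy hsum (by simp [hκ])

end FiberSums

section BoxSlice

open Set

variable {n : ℕ}

def boxSlice (u : Fin n → ℝ) (N : ℝ) : Set (Fin n → ℝ) :=
  {x | (∀ k, x k ∈ Icc 0 (u k)) ∧ ∑ k, x k = N}

def transfer (i j : Fin n) (δ : ℝ) : Fin n → ℝ :=
  Pi.single j δ - Pi.single i δ

section Transfer

variable {i j k : Fin n} {δ : ℝ}

theorem transfer_apply_left (hij : i ≠ j) : transfer i j δ i = -δ := by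
  simp [transfer, hij]

theorem transfer_apply_right (hij : i ≠ j) : transfer i j δ j = δ := by
  simp [transfer, hij.symm]

theorem transfer_apply_of_ne (hki : k ≠ i) (hkj : k ≠ j) : transfer i j δ k = 0 := by
  simp [transfer, hki, hkj]

theorem sum_transfer : ∑ k, transfer i j δ k = 0 := by
  simp [transfer, sum_sub_distrib]

theorem transfer_neg : transfer i j (-δ) = -transfer i j δ := by
  simp only [transfer, Pi.single_neg]
  abel

theorem transfer_mul (c : ℝ) : transfer i j (c * δ) = c • transfer i j δ := by
  simp [transfer, smul_sub, ← Pi.single_smul]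

end Transfer

variable {u : Fin n → ℝ} {N : ℝ} {x y : Fin n → ℝ}

theorem convex_boxSlice : Convex ℝ (boxSlice u N) := by
  rintro x ⟨hx, hxN⟩ y ⟨hy, hyN⟩ a b ha hb hab
  refine ⟨fun k => convex_Icc 0 (u k) (hx k) (hy k) ha hb hab, ?_⟩
  simp [sum_add_distrib, ← mul_sum, hxN, hyN, ← add_mul, hab]

theorem add_transfer_mem_boxSlice (hx : x ∈ boxSlice u N) {i j : Fin n} (hij : i ≠ j) {δ : ℝ}
    (hi : x i - δ ∈ Icc 0 (u i)) (hj : x j + δ ∈ Icc 0 (u j)) :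
    x + transfer i j δ ∈ boxSlice u N := by
  refine ⟨fun k => ?_, by simp [sum_add_distrib, sum_transfer, hx.2]⟩
  by_cases hki : k = i
  · subst hki; simpa [transfer_apply_left hij, ← sub_eq_add_neg] using hi
  by_cases hkj : k = j
  · subst hkj; simpa [transfer_apply_right hij] using hj
  simpa [transfer_apply_of_ne hki hkj] using hx.1 k

theorem exists_transfer_mem_boxSlice (hx : x ∈ boxSlice u N) {i j : Fin n} (hij : i ≠ j)
    (hi : x i ∈ Ioo 0 (u i)) (hj : x j ∈ Ioo 0 (u j)) :
    ∃ ε > 0, x + transfer i j ε ∈ boxSlice u N ∧ x - transfer i j ε ∈ boxSlice u N := by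
  obtain ⟨ε, hε, hεi, hεj⟩ : ∃ ε > 0, ε ≤ min (x i) (u i - x i) ∧ ε ≤ min (x j) (u j - x j) :=
    ⟨_, lt_min (lt_min hi.1 (sub_pos.2 hi.2)) (lt_min hj.1 (sub_pos.2 hj.2)),
      min_le_left _ _, min_le_right _ _⟩
  simp only [le_min_iff] at hεi hεj
  refine ⟨ε, hε, add_transfer_mem_boxSlice hx hij ?_ ?_, ?_⟩
  · constructor <;> linarith
  · constructor <;> linarith
  · rw [sub_eq_add_neg, ← transfer_neg]
    exact add_transfer_mem_boxSlice hx hij (by constructor <;> linarith)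
      (by constructor <;> linarith)

theorem eq_zero_or_eq_of_notMem_Ioo {a U : ℝ} (ha : a ∈ Icc 0 U) (h : a ∉ Ioo 0 U) :
    a = 0 ∨ a = U := by
  rcases ha.1.eq_or_lt with h₀ | h₀
  · exact .inl h₀.symm
  rcases ha.2.eq_or_lt with hU | hU
  · exact .inr hU
  exact absurd ⟨h₀, hU⟩ h

theorem isExtreme_boxSlice_eqOn (C : Set (Fin n)) (hC : ∀ k ∈ C, x k = 0 ∨ x k = u k) :
    IsExtreme ℝ (boxSlice u N) {z ∈ boxSlice u N | ∀ k ∈ C, z k = x k} := by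
  refine ⟨sep_subset _ _, ?_⟩
  rintro z₁ hz₁ z₂ hz₂ w ⟨-, hw⟩ ⟨a, b, ha, hb, hab, rfl⟩
  refine ⟨hz₁, fun k hk => ?_⟩
  have hwk : a * z₁ k + b * z₂ k = x k := by simpa using hw k hk
  have h₁ := hz₁.1 k
  have h₂ := hz₂.1 k
  rcases hC k hk with h | h <;> rw [h] at hwk ⊢ <;>
    nlinarith [h₁.1, h₁.2, h₂.1, h₂.2]

theorem mem_extremePoints_boxSlice_iff :
    x ∈ (boxSlice u N).extremePoints ℝ ↔
      x ∈ boxSlice u N ∧ {k | x k ∈ Ioo 0 (u k)}.Subsingleton := by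
  refine ⟨fun hx => ⟨hx.1, fun k₁ hk₁ k₂ hk₂ => ?_⟩, fun ⟨hx, hfrac⟩ => ?_⟩
  · by_contra hne
    obtain ⟨ε, hε, hplus, hminus⟩ := exists_transfer_mem_boxSlice hx.1 hne hk₁ hk₂
    have hfix := (isExtreme_singleton.2 hx).2 hplus hminus rfl (mem_openSegment_add_sub x _)
    have := congr_fun (Set.mem_singleton_iff.1 hfix) k₂
    simp [transfer_apply_right hne] at this
    exact hε.ne' this
  rw [← isExtreme_singleton]
  convert isExtreme_boxSlice_eqOn (N := N) {k | x k ∉ Ioo 0 (u k)}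
    (fun k hk => eq_zero_or_eq_of_notMem_Ioo (hx.1 k) hk)
  ext z
  refine ⟨?_, fun ⟨hz, hzx⟩ => funext fun k => ?_⟩
  · rintro rfl; exact ⟨hx, fun _ _ => rfl⟩
  by_cases hk : x k ∈ Ioo 0 (u k)
  · have hrest : ∀ k', k' ≠ k → k' ≠ k → z k' = x k' :=
      fun k' hk' _ => hzx k' fun hk'' => hk' (hfrac hk'' hk)
    simpa using sum_eq_sum_of_eqOn_compl_pair hrest (hz.2.trans hx.2.symm) (K := {k}) Iff.rfl
  · exact hzx k hk

end BoxSlice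

section Edges

open Set

variable {n : ℕ} {u : Fin n → ℝ} {N : ℝ} {x y : Fin n → ℝ}

theorem SkeletonAdj.exists_eqOn_compl_pair (h : SkeletonAdj (boxSlice u N) x y) :
    ∃ i j, ∀ k, k ≠ i → k ≠ j → x k = y k := by
  obtain ⟨hxy, -, -, hext⟩ := h
  -- Two coordinates of the midpoint that are strictly inside their ranges give a direction
  -- of movement inside `P`; extremality forces it along `y - x`, so no third coordinate moves.
  have no_three : ∀ k₁ k₂ k₃, k₁ ≠ k₂ → k₃ ≠ k₁ → k₃ ≠ k₂ → x k₁ ≠ y k₁ → x k₂ ≠ y k₂ →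
      x k₃ = y k₃ := by
    intro k₁ k₂ k₃ h₁₂ h₃₁ h₃₂ d₁ d₂
    by_contra d₃
    set z := midpoint ℝ x y
    have hz : z ∈ boxSlice u N := hext.subset (midpoint_mem_segment x y)
    have hzk : ∀ k, x k ≠ y k → z k ∈ Ioo 0 (u k) := by
      intro k hk
      have hxk := (hext.subset (left_mem_segment ℝ x y)).1 k
      have hyk := (hext.subset (right_mem_segment ℝ x y)).1 k
      simp only [z, midpoint_eq_smul_add, Pi.smul_apply, Pi.add_apply, smul_eq_mul, invOf_eq_inv]
      rcases hk.lt_or_gt with hlt | hlt <;> constructor <;> linarith [hxk.1, hxk.2, hyk.1, hyk.2]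
    obtain ⟨ε, hε, hplus, hminus⟩ := exists_transfer_mem_boxSlice hz h₁₂ (hzk k₁ d₁) (hzk k₂ d₂)
    have hmem := hext.2 hplus hminus (midpoint_mem_segment x y) (mem_openSegment_add_sub z _)
    rw [segment_eq_image'] at hmem
    obtain ⟨θ, -, hθ⟩ := hmem
    have e₃ := congr_fun hθ k₃
    have e₂ := congr_fun hθ k₂
    simp only [z, Pi.add_apply, Pi.smul_apply, Pi.sub_apply, smul_eq_mul, midpoint_eq_smul_add,
      invOf_eq_inv, transfer_apply_of_ne h₃₁ h₃₂,
      transfer_apply_right h₁₂] at e₃ e₂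
    have hθ : θ = 1 / 2 := by
      have : (θ - 1 / 2) * (y k₃ - x k₃) = 0 := by linarith
      rcases mul_eq_zero.1 this with h | h
      · linarith
      · exact absurd (by linarith) d₃
    subst hθ
    linarith
  obtain ⟨k₁, d₁⟩ := Function.ne_iff.1 hxy
  by_contra hall
  push Not at hall
  obtain ⟨k₂, h₂₁, -, d₂⟩ := hall k₁ k₁
  obtain ⟨k₃, h₃₁, h₃₂, d₃⟩ := hall k₁ k₂
  exact d₃ (no_three k₁ k₂ k₃ h₂₁.symm h₃₁ h₃₂ d₁ d₂)

theorem mem_extremePoints_boxSlice_of_pair (hx : x ∈ boxSlice u N) {i j : Fin n}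
    (hoff : ∀ k, k ≠ i → k ≠ j → x k ∉ Ioo 0 (u k))
    (hij : x i ∉ Ioo 0 (u i) ∨ x j ∉ Ioo 0 (u j)) :
    x ∈ (boxSlice u N).extremePoints ℝ := by
  refine mem_extremePoints_boxSlice_iff.2 ⟨hx, ?_⟩
  rcases hij with h | h
  · refine subsingleton_singleton (a := j).anti fun k hk => ?_
    by_contra hkj
    exact hoff k (fun hki => h (hki ▸ hk)) hkj hk
  · refine subsingleton_singleton (a := i).anti fun k hk => ?_
    by_contra hki
    exact hoff k hki (fun hkj => h (hkj ▸ hk)) hk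

theorem segment_add_transfer_eq (hx : x ∈ boxSlice u N) {i j : Fin n} (hij : i ≠ j) {δ : ℝ}
    (hδ : 0 < δ) (hy : x + transfer i j δ ∈ boxSlice u N) (hstart : x i = u i ∨ x j = 0)
    (hend : x i = δ ∨ x j + δ = u j) :
    segment ℝ x (x + transfer i j δ) =
      {z ∈ boxSlice u N | ∀ k ∈ {k | k ≠ i ∧ k ≠ j}, z k = x k} := by
  ext z
  refine ⟨fun hz => ⟨convex_boxSlice.segment_subset hx hy hz, ?_⟩, fun ⟨hz, hzx⟩ => ?_⟩
  · rw [segment_eq_image'] at hz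
    obtain ⟨θ, -, rfl⟩ := hz
    rintro k ⟨hki, hkj⟩
    simp [transfer_apply_of_ne hki hkj]
  have hpair : z i + z j = x i + x j := by
    simpa [sum_pair hij] using sum_eq_sum_of_eqOn_compl_pair (fun k hki hkj => hzx k ⟨hki, hkj⟩)
      (hz.2.trans hx.2.symm) (K := {i, j}) (by simp)
  have hzi : z i ≤ x i := by
    rcases hstart with h | h
    · exact h ▸ (hz.1 i).2
    · linarith [(hz.1 j).1]
  have hzi' : x i - δ ≤ z i := by
    rcases hend with h | h
    · linarith [(hz.1 i).1]
    · linarith [(hz.1 j).2]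
  rw [segment_eq_image']
  refine ⟨(x i - z i) / δ, ⟨div_nonneg (by linarith) hδ.le, (div_le_one hδ).2 (by linarith)⟩, ?_⟩
  change x + ((x i - z i) / δ) • (x + transfer i j δ - x) = z
  rw [add_sub_cancel_left, ← transfer_mul, div_mul_cancel₀ _ hδ.ne']
  funext k
  by_cases hki : k = i
  · subst hki; simp [transfer_apply_left hij]
  by_cases hkj : k = j
  · subst hkj; simp [transfer_apply_right hij]; linarith
  simp [transfer_apply_of_ne hki hkj, hzx k ⟨hki, hkj⟩]

theorem skeletonAdj_add_transfer (hx : x ∈ boxSlice u N) {i j : Fin n} (hij : i ≠ j)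
    (hoff : ∀ k, k ≠ i → k ≠ j → x k ∉ Ioo 0 (u k)) {δ : ℝ} (hδ : 0 < δ)
    (hδi : δ ≤ x i) (hδj : x j + δ ≤ u j) (hstart : x i = u i ∨ x j = 0)
    (hend : x i = δ ∨ x j + δ = u j) :
    SkeletonAdj (boxSlice u N) x (x + transfer i j δ) := by
  have hy := add_transfer_mem_boxSlice hx hij
    ⟨by linarith, by linarith [(hx.1 i).2]⟩ ⟨by linarith [(hx.1 j).1], hδj⟩
  have hyi : (x + transfer i j δ) i = x i - δ := by
    simp [transfer_apply_left hij, sub_eq_add_neg]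
  have hyj : (x + transfer i j δ) j = x j + δ := by simp [transfer_apply_right hij]
  have hyk : ∀ k, k ≠ i → k ≠ j → (x + transfer i j δ) k = x k := fun k hki hkj => by
    simp [transfer_apply_of_ne hki hkj]
  refine ⟨fun h => ?_, mem_extremePoints_boxSlice_of_pair hx hoff ?_,
    mem_extremePoints_boxSlice_of_pair hy (fun k hki hkj => hyk k hki hkj ▸ hoff k hki hkj) ?_,
    segment_add_transfer_eq hx hij hδ hy hstart hend ▸ isExtreme_boxSlice_eqOn _
      fun k ⟨hki, hkj⟩ => eq_zero_or_eq_of_notMem_Ioo (hx.1 k) (hoff k hki hkj)⟩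
  · have := congr_fun h j
    linarith
  · rcases hstart with h | h <;> simp [h]
  · rcases hend with h | h
    · left; simp [hyi, h]
    · right; simp [hyj, h]

end Edges

section Paths

variable {n : ℕ} {P : Set (Fin n → ℝ)} {x y z : Fin n → ℝ} {ℓ : ℕ}

theorem skeletonPath_zero (hx : x ∈ P.extremePoints ℝ) : SkeletonPath P x x 0 :=
  ⟨fun _ => x, rfl, rfl, fun _ _ => hx, fun _ h => absurd h (Nat.not_lt_zero _)⟩

theorem SkeletonPath.eq_of_length_zero (h : SkeletonPath P x y 0) : x = y :=
  let ⟨_, h₀, h₁, _⟩ := h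
  h₀.symm.trans h₁

theorem SkeletonAdj.skeletonPath_cons (hxy : SkeletonAdj P x y) (h : SkeletonPath P y z ℓ) :
    SkeletonPath P x z (ℓ + 1) := by
  obtain ⟨g, hg₀, hgℓ, hgv, hga⟩ := h
  refine ⟨fun k => Nat.casesOn (motive := fun _ => Fin n → ℝ) k x g, rfl, hgℓ,
    fun k hk => ?_, fun k hk => ?_⟩
  · cases k with
    | zero => exact hxy.2.1
    | succ k => exact hgv k (by omega)
  · cases k with
    | zero => simpa [hg₀] using hxy
    | succ k => exact hga k (by omega)

theorem SkeletonPath.exists_skeletonAdj (h : SkeletonPath P x z (ℓ + 1)) :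
    ∃ y, SkeletonAdj P x y ∧ SkeletonPath P y z ℓ := by
  obtain ⟨g, hg₀, hgℓ, hgv, hga⟩ := h
  exact ⟨g 1, hg₀ ▸ hga 0 (by omega), fun k => g (k + 1), rfl, hgℓ,
    fun k hk => hgv _ (by omega), fun k hk => hga _ (by omega)⟩

end Paths

section LowerBound

variable {n : ℕ} {u : Fin n → ℝ} {N : ℝ} {x y : Fin n → ℝ} {ℓ : ℕ}

theorem SkeletonPath.exists_fiberSumsEq (h : SkeletonPath (boxSlice u N) x y ℓ) :
    ∃ κ : Fin n → Fin n, n ≤ #(univ.image κ) + ℓ ∧ FiberSumsEq κ x y := by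
  induction ℓ generalizing x with
  | zero =>
    obtain rfl := h.eq_of_length_zero
    exact ⟨id, by simp, fun _ => rfl⟩
  | succ ℓ ih =>
    obtain ⟨x', hadj, hpath⟩ := h.exists_skeletonAdj
    obtain ⟨κ, hcard, hκ⟩ := ih hpath
    obtain ⟨i, j, hij⟩ := hadj.exists_eqOn_compl_pair
    set merge : Fin n → Fin n := fun b => if b = κ j then κ i else b
    have hstep : FiberSumsEq (merge ∘ κ) x x' :=
      fiberSumsEq_of_eqOn_compl_pair hij (hadj.2.1.1.2.trans hadj.2.2.1.1.2.symm)
        (by by_cases h : κ i = κ j <;> simp [merge, h])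
    have hmerge : #(univ.image κ) ≤ #(univ.image (merge ∘ κ)) + 1 := by
      refine (card_le_card fun b hb => ?_).trans (card_insert_le (κ j) _)
      obtain ⟨k, -, rfl⟩ := mem_image.1 hb
      by_cases hk : κ k = κ j
      · simp [hk]
      · exact mem_insert_of_mem (mem_image.2 ⟨k, mem_univ _, by simp [merge, hk]⟩)
    exact ⟨merge ∘ κ, by omega, hstep.trans (hκ.comp merge)⟩

end LowerBound

section UpperBound

theorem exists_lt_of_sum_eq_of_lt {ι M : Type*} [AddCommMonoid M] [LinearOrder M]
    [IsOrderedCancelAddMonoid M] {s : Finset ι} {f g : ι → M}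
    (h : ∑ i ∈ s, f i = ∑ i ∈ s, g i) {k : ι} (hk : k ∈ s) (hlt : f k < g k) :
    ∃ i ∈ s, g i < f i := by
  by_contra hcon
  push Not at hcon
  exact (sum_lt_sum hcon ⟨k, hk, hlt⟩).ne h

theorem card_add_card_image_lt {ι β : Type*} [DecidableEq ι] [DecidableEq β]
    {κ : ι → β} {D D' : Finset ι} {i j : ι} (hi : i ∈ D) (hj : j ∈ D) (hij : i ≠ j)
    (hκ : κ i = κ j) (hsub : D' ⊆ D) (hrest : ∀ k ∈ D, k ≠ i → k ≠ j → k ∈ D')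
    (hfix : i ∉ D' ∨ j ∉ D') :
    #D' + #(D.image κ) < #D + #(D'.image κ) := by
  by_cases hb : κ i ∈ D'.image κ
  · have himage : D.image κ ⊆ D'.image κ := by
      intro b hb'
      obtain ⟨k, hk, rfl⟩ := mem_image.1 hb'
      by_cases hki : k = i
      · exact hki ▸ hb
      by_cases hkj : k = j
      · exact hkj ▸ hκ ▸ hb
      exact mem_image_of_mem κ (hrest k hk hki hkj)
    have hlt : #D' < #D := card_lt_card
      ⟨hsub, fun h => hfix.elim (fun hi' => hi' (h hi)) (fun hj' => hj' (h hj))⟩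
    have := card_le_card himage
    omega
  · have hi' : i ∉ D' := fun h => hb (mem_image_of_mem κ h)
    have hj' : j ∉ D' := fun h => hb (hκ ▸ mem_image_of_mem κ h)
    have hD' : D' ⊆ (D.erase i).erase j := fun k hk => by
      simp [ne_of_mem_of_not_mem hk hi', ne_of_mem_of_not_mem hk hj', hsub hk]
    have himage : D.image κ ⊆ insert (κ i) (D'.image κ) := by
      intro b hb'
      obtain ⟨k, hk, rfl⟩ := mem_image.1 hb'
      by_cases hki : k = i
      · simp [hki]
      by_cases hkj : k = j
      · simp [hkj, hκ]
      exact mem_insert_of_mem (mem_image_of_mem κ (hrest k hk hki hkj))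
    have h₁ := card_erase_add_one hi
    have h₂ := card_erase_add_one (mem_erase.2 ⟨hij.symm, hj⟩)
    have := card_le_card hD'
    have := (card_le_card himage).trans (card_insert_le _ _)
    omega

open Set

variable {n : ℕ} {u : Fin n → ℝ} {N : ℝ} {x y : Fin n → ℝ}

theorem exists_source_sink {β : Type*} [DecidableEq β] {κ : Fin n → β}
    (hx : x ∈ (boxSlice u N).extremePoints ℝ) (hy : ∀ k, y k = 0 ∨ y k = u k)
    (hκ : FiberSumsEq κ x y) (hxy : x ≠ y) :
    ∃ i j, y i < x i ∧ x j < y j ∧ κ i = κ j ∧ ∀ k, x k ∈ Ioo 0 (u k) → k = i ∨ k = j := by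
  have hfrac := (mem_extremePoints_boxSlice_iff.1 hx).2
  obtain ⟨k₀, hk₀, hfrac₀⟩ : ∃ k₀, x k₀ ≠ y k₀ ∧ ∀ k, x k ∈ Ioo 0 (u k) → k = k₀ := by
    by_cases hf : ∃ f, x f ∈ Ioo 0 (u f)
    · obtain ⟨f, hf⟩ := hf
      refine ⟨f, fun h => ?_, fun k hk => hfrac hk hf⟩
      rcases hy f with h' | h' <;> simp [h, h'] at hf
    · push Not at hf
      obtain ⟨k₀, hk₀⟩ := Function.ne_iff.1 hxy
      exact ⟨k₀, hk₀, fun k hk => absurd hk (hf k)⟩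
  have hfiber : k₀ ∈ univ.filter fun k => κ k = κ k₀ := by simp
  rcases hk₀.lt_or_gt with hlt | hlt
  · obtain ⟨i, hi, hi'⟩ := exists_lt_of_sum_eq_of_lt (hκ (κ k₀)) hfiber hlt
    exact ⟨i, k₀, hi', hlt, (mem_filter.1 hi).2, fun k hk => .inr (hfrac₀ k hk)⟩
  · obtain ⟨j, hj, hj'⟩ := exists_lt_of_sum_eq_of_lt (hκ (κ k₀)).symm hfiber hlt
    exact ⟨k₀, j, hlt, hj', (mem_filter.1 hj).2.symm, fun k hk => .inl (hfrac₀ k hk)⟩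

theorem exists_skeletonAdj_add_transfer (hx : x ∈ (boxSlice u N).extremePoints ℝ)
    (hy : ∀ k, y k = 0 ∨ y k = u k) {i j : Fin n} (hi : y i < x i) (hj : x j < y j)
    (hfrac : ∀ k, x k ∈ Ioo 0 (u k) → k = i ∨ k = j) :
    ∃ δ, SkeletonAdj (boxSlice u N) x (x + transfer i j δ) ∧
      ((x + transfer i j δ) i = y i ∨ (x + transfer i j δ) j = y j) := by
  have hxP := hx.1
  have hij : i ≠ j := by rintro rfl; linarith
  have hyi : y i = 0 := (hy i).resolve_right fun h => by linarith [(hxP.1 i).2]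
  have hyj : y j = u j := (hy j).resolve_left fun h => by linarith [(hxP.1 j).1]
  have hstart : x i = u i ∨ x j = 0 := by
    by_cases hfi : x i ∈ Ioo 0 (u i)
    · have hfj : x j ∉ Ioo 0 (u j) := fun hfj =>
        hij ((mem_extremePoints_boxSlice_iff.1 hx).2 hfi hfj)
      exact .inr ((eq_zero_or_eq_of_notMem_Ioo (hxP.1 j) hfj).resolve_right (by linarith))
    · exact .inl ((eq_zero_or_eq_of_notMem_Ioo (hxP.1 i) hfi).resolve_left (by linarith))
  set δ := min (x i) (u j - x j)
  have hδi : δ ≤ x i := min_le_left _ _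
  have hδj : δ ≤ u j - x j := min_le_right _ _
  have hend : x i = δ ∨ x j + δ = u j := by
    rcases min_choice (x i) (u j - x j) with h | h
    · exact .inl h.symm
    · exact .inr (by linarith)
  refine ⟨δ, skeletonAdj_add_transfer hxP hij (fun k hki hkj hk => (hfrac k hk).elim hki hkj)
    (lt_min (by linarith) (by linarith)) hδi (by linarith) hstart hend, ?_⟩
  rcases hend with h | h
  · left; simp [transfer_apply_left hij, hyi, ← h]
  · right; simp [transfer_apply_right hij, hyj, h]

theorem exists_skeletonPath_of_fiberSumsEq {β : Type*} [DecidableEq β] {κ : Fin n → β}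
    (hy : ∀ k, y k = 0 ∨ y k = u k) (hx : x ∈ (boxSlice u N).extremePoints ℝ)
    (hκ : FiberSumsEq κ x y) :
    ∃ ℓ, ℓ + #((univ.filter fun k => x k ≠ y k).image κ) ≤ #(univ.filter fun k => x k ≠ y k) ∧
      SkeletonPath (boxSlice u N) x y ℓ := by
  obtain ⟨d, hd⟩ : ∃ d, #(univ.filter fun k => x k ≠ y k) -
      #((univ.filter fun k => x k ≠ y k).image κ) = d := ⟨_, rfl⟩
  induction d using Nat.strong_induction_on generalizing x with
  | _ d ih =>
  by_cases hxy : x = y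
  · subst hxy
    exact ⟨0, by simp, skeletonPath_zero hx⟩
  obtain ⟨i, j, hi, hj, hκij, hfrac⟩ := exists_source_sink hx hy hκ hxy
  obtain ⟨δ, hadj, hfix⟩ := exists_skeletonAdj_add_transfer hx hy hi hj hfrac
  have hij : i ≠ j := by rintro rfl; linarith
  set x' := x + transfer i j δ
  have hoff : ∀ k, k ≠ i → k ≠ j → x' k = x k := fun k hki hkj => by
    simp [x', transfer_apply_of_ne hki hkj]
  have hκ' : FiberSumsEq κ x' y := (fiberSumsEq_of_eqOn_compl_pair hoff
    (by simp [x', sum_add_distrib, sum_transfer]) hκij).trans hκ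
  have hsub : (univ.filter fun k => x' k ≠ y k) ⊆ univ.filter fun k => x k ≠ y k := by
    intro k hk
    by_cases hki : k = i
    · simpa [hki] using hi.ne'
    by_cases hkj : k = j
    · simpa [hkj] using hj.ne
    simpa [hoff k hki hkj] using hk
  have hcount := card_add_card_image_lt (κ := κ) (by simpa using hi.ne') (by simpa using hj.ne)
    hij hκij hsub (fun k hk hki hkj => by simpa [hoff k hki hkj] using hk) (by simpa using hfix)
  have := card_image_le (s := univ.filter fun k => x k ≠ y k) (f := κ)
  have := card_image_le (s := univ.filter fun k => x' k ≠ y k) (f := κ)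
  obtain ⟨ℓ, hℓ, hpath⟩ := ih _ (by omega) hadj.2.2.1 hκ' rfl
  exact ⟨ℓ + 1, by omega, hadj.skeletonPath_cons hpath⟩

end UpperBound

section Partitions

theorem sameSumPartition_card_image {S T β : Type*} [Fintype S] [Fintype T] [DecidableEq β]
    {s : S → ℕ} {t : T → ℕ} (hs : ∀ i, 0 < s i) (ht : ∀ j, 0 < t j) (κ : S ⊕ T → β)
    (h : ∀ b, ∑ i with κ (.inl i) = b, s i = ∑ j with κ (.inr j) = b, t j) :
    SameSumPartition s t #(univ.image κ) := by
  have hST : ∀ b, (∃ i, κ (.inl i) = b) ↔ ∃ j, κ (.inr j) = b := by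
    intro b
    have hS : (∃ i, κ (.inl i) = b) ↔ 0 < ∑ i with κ (.inl i) = b, s i := by simp [sum_pos_iff, hs]
    have hT : (∃ j, κ (.inr j) = b) ↔ 0 < ∑ j with κ (.inr j) = b, t j := by simp [sum_pos_iff, ht]
    rw [hS, hT, h]
  have hmem : ∀ a, κ a ∈ univ.image κ := fun a => mem_image_of_mem κ (mem_univ a)
  set E := (univ.image κ).equivFin
  refine ⟨fun i => E ⟨κ (.inl i), hmem _⟩, fun j => E ⟨κ (.inr j), hmem _⟩, fun l => ?_,
    fun l => ?_, fun l => ?_⟩ <;> obtain ⟨⟨b, hb⟩, rfl⟩ := E.surjective l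
  · obtain ⟨a, -, rfl⟩ := mem_image.1 hb
    obtain ⟨i, hi⟩ : ∃ i, κ (.inl i) = κ a := by
      cases a with
      | inl i => exact ⟨i, rfl⟩
      | inr j => exact (hST _).2 ⟨j, rfl⟩
    exact ⟨i, by simp [hi]⟩
  · obtain ⟨a, -, rfl⟩ := mem_image.1 hb
    obtain ⟨j, hj⟩ : ∃ j, κ (.inr j) = κ a := by
      cases a with
      | inl i => exact (hST _).1 ⟨i, rfl⟩
      | inr j => exact ⟨j, rfl⟩
    exact ⟨j, by simp [hj]⟩
  · simpa only [E.injective.eq_iff, Subtype.mk.injEq] using h b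

variable {p q : ℕ}

theorem sum_filter_addCases {M : Type*} [AddCommMonoid M] (f : Fin p → M) (g : Fin q → M)
    (φ : Fin (p + q) → Prop) [DecidablePred φ] :
    ∑ k with φ k, Fin.addCases (motive := fun _ => M) f g k =
      ∑ i with φ (Fin.castAdd q i), f i + ∑ j with φ (Fin.natAdd p j), g j := by
  simp only [sum_filter, Fin.sum_univ_add, Fin.addCases_left, Fin.addCases_right]

def supplyVec (s : Fin p → ℕ) (q : ℕ) : Fin (p + q) → ℝ :=
  Fin.addCases (fun i => (s i : ℝ)) (fun _ => 0)

def demandVec (p : ℕ) (t : Fin q → ℕ) : Fin (p + q) → ℝ :=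
  Fin.addCases (fun _ => 0) (fun j => (t j : ℝ))

def capacityVec (s : Fin p → ℕ) (t : Fin q → ℕ) : Fin (p + q) → ℝ :=
  Fin.addCases (fun i => (s i : ℝ)) (fun j => (t j : ℝ))

variable {s : Fin p → ℕ} {t : Fin q → ℕ}

theorem fiberSumsEq_supplyVec_demandVec_iff {β : Type*} [DecidableEq β] {κ : Fin (p + q) → β} :
    FiberSumsEq κ (supplyVec s q) (demandVec p t) ↔
      ∀ b, ∑ i with κ (Fin.castAdd q i) = b, s i = ∑ j with κ (Fin.natAdd p j) = b, t j := by
  refine forall_congr' fun b => ?_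
  simp only [supplyVec, demandVec, sum_filter_addCases, sum_const_zero, add_zero, zero_add]
  exact_mod_cast Iff.rfl

variable {N : ℕ}

theorem exists_skeletonPath_of_sameSumPartition (hs : ∀ i, 0 < s i) (ht : ∀ j, 0 < t j)
    (hsN : ∑ i, s i = N) {m : ℕ} (hm : SameSumPartition s t m) :
    ∃ L, L + m ≤ p + q ∧
      SkeletonPath (boxSlice (capacityVec s t) N) (supplyVec s q) (demandVec p t) L := by
  obtain ⟨σ, τ, hσ, -, hsum⟩ := hm
  set κ : Fin (p + q) → Fin m := Fin.addCases σ τ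
  have hdemand : ∀ k, demandVec p t k = 0 ∨ demandVec p t k = capacityVec s t k := by
    simp [Fin.forall_fin_add, demandVec, capacityVec]
  have hsupply : supplyVec s q ∈ (boxSlice (capacityVec s t) N).extremePoints ℝ := by
    refine mem_extremePoints_boxSlice_iff.2 ⟨⟨?_, ?_⟩, ?_⟩
    · simp [Fin.forall_fin_add, supplyVec, capacityVec]
    · simp [supplyVec, Fin.sum_univ_add, ← hsN]
    · convert Set.subsingleton_empty
      simp [Set.eq_empty_iff_forall_notMem, Fin.forall_fin_add, supplyVec, capacityVec]
  have hκ : FiberSumsEq κ (supplyVec s q) (demandVec p t) :=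
    fiberSumsEq_supplyVec_demandVec_iff.2 (by simpa [κ] using hsum)
  obtain ⟨L, hL, hpath⟩ := exists_skeletonPath_of_fiberSumsEq hdemand hsupply hκ
  have hdiff : ∀ k, supplyVec s q k ≠ demandVec p t k := (Fin.forall_fin_add _).2
    ⟨fun i => by simpa [supplyVec, demandVec] using (hs i).ne',
      fun j => by simpa [supplyVec, demandVec, eq_comm] using (ht j).ne'⟩
  have hD : (univ.filter fun k => supplyVec s q k ≠ demandVec p t k) = univ :=
    filter_true_of_mem fun k _ => hdiff k
  have himage : univ.image κ = univ := eq_univ_of_forall fun l =>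
    let ⟨i, hi⟩ := hσ l
    mem_image.2 ⟨Fin.castAdd q i, mem_univ _, by simp [κ, hi]⟩
  exact ⟨L, by simpa [hD, himage] using hL, hpath⟩

theorem exists_sameSumPartition_of_skeletonPath (hs : ∀ i, 0 < s i) (ht : ∀ j, 0 < t j) {ℓ : ℕ}
    (h : SkeletonPath (boxSlice (capacityVec s t) N) (supplyVec s q) (demandVec p t) ℓ) :
    ∃ m, SameSumPartition s t m ∧ p + q ≤ m + ℓ := by
  obtain ⟨κ, hcard, hκ⟩ := h.exists_fiberSumsEq
  refine ⟨_, sameSumPartition_card_image hs ht (κ ∘ finSumFinEquiv) fun b =>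
    fiberSumsEq_supplyVec_demandVec_iff.1 hκ b, ?_⟩
  rwa [← image_image, image_univ_equiv]

end Partitions

/-- With `n = p + q`, `u = (s₁,…,s_p,t₁,…,t_q)`,
`a = (s₁,…,s_p,0,…,0)`, `b = (0,…,0,t₁,…,t_q)` and
`P = {x ∈ ℝⁿ : 0 ≤ xᵢ ≤ uᵢ, ∑ xᵢ = N}`, the minimum length of a path from `a` to `b` on
the skeleton of `P` equals `p + q - m`, where `m` is the maximum size of a same-sum
partition of `[p]` and `[q]` with respect to the weights `(sᵢ)` and `(tⱼ)`. -/
theorem min_skeleton_path_eq_sub_max_partition (p q : ℕ)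
    (s : Fin p → ℕ) (t : Fin q → ℕ) (N : ℕ)
    (hs : ∀ i, 0 < s i) (ht : ∀ j, 0 < t j)
    (hsN : ∑ i, s i = N) (htN : ∑ j, t j = N) :
    IsLeast {ℓ : ℕ | SkeletonPath
        {x : Fin (p + q) → ℝ |
          (∀ i, 0 ≤ x i ∧ x i ≤ Fin.addCases (fun i₁ => (s i₁ : ℝ)) (fun j₁ => (t j₁ : ℝ)) i) ∧
          ∑ i, x i = (N : ℝ)}
        (Fin.addCases (fun i₁ => (s i₁ : ℝ)) (fun _ => 0))
        (Fin.addCases (fun _ => 0) (fun j₁ => (t j₁ : ℝ))) ℓ}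
      (p + q - sSup {m : ℕ | SameSumPartition s t m}) := by
  change IsLeast {ℓ | SkeletonPath (boxSlice (capacityVec s t) N) (supplyVec s q)
    (demandVec p t) ℓ} _
  have hbdd : BddAbove {m | SameSumPartition s t m} := ⟨p, fun m ⟨σ, _, hσ, _⟩ => by
    simpa using Fintype.card_le_of_surjective σ hσ⟩
  have hne : {m | SameSumPartition s t m}.Nonempty :=
    ⟨_, sameSumPartition_card_image hs ht (fun _ => ()) (by simp [hsN, htN])⟩
  obtain ⟨L, hL, hpath⟩ :=
    exists_skeletonPath_of_sameSumPartition hs ht hsN (Nat.sSup_mem hne hbdd)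
  have hlower : ∀ ℓ ∈ {ℓ | SkeletonPath (boxSlice (capacityVec s t) N) (supplyVec s q)
      (demandVec p t) ℓ}, p + q - sSup {m | SameSumPartition s t m} ≤ ℓ := fun ℓ hℓ => by
    obtain ⟨m, hm, hle⟩ := exists_sameSumPartition_of_skeletonPath hs ht hℓ
    have := le_csSup hbdd hm
    omega
  have := hlower L hpath
  have hL' : L = p + q - sSup {m | SameSumPartition s t m} := by omega
  exact ⟨hL' ▸ hpath, hlower⟩

end PaperBox
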